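/- Suppose R satisfies the curvature-type symmetries and the q-invariance R(qx,qy,qz,qu) = R(x,y,z,u). Let x ∈ ℝ³ and let u = αx + β qx + γ q²x with α, β, γ ∈ ℝ. Then R(u, qu, u, qu) = ((α²+βγ)² + (γ²+αβ)² + (β²−αγ)²)·R(x, qx, x, qx) − 2((α²+βγ)(γ²+αβ) + (γ²+αβ)(β²−αγ) + (α²+βγ)(β²−αγ))·R(x, qx, q²x, x). -/
import Mathlib


/-- The structure `q`, given by `q(x¹,x²,x³) = (-x²,-x³,-x¹)`, with `q³ = -id`. -/
def q (x : Fin 3 → ℝ) : Fin 3 → ℝ := ![-(x 1), -(x 2), -(x 0)]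

set_option maxHeartbeats 4000000 in
/-- if `R` is a multilinear map with the curvature-type symmetries and the
`q`-invariance, and `u = αx + β qx + γ q²x`, then
`R(u,qu,u,qu) = ((α²+βγ)² + (γ²+αβ)² + (β²-αγ)²)·R(x,qx,x,qx)
  - 2((α²+βγ)(γ²+αβ) + (γ²+αβ)(β²-αγ) + (α²+βγ)(β²-αγ))·R(x,qx,q²x,x)`. -/
theorem curvature_of_combination (R : MultilinearMap ℝ (fun _ : Fin 4 => Fin 3 → ℝ) ℝ)
    (hsym1 : ∀ x y z u : Fin 3 → ℝ, R ![x, y, z, u] = -R ![y, x, z, u])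
    (hsym2 : ∀ x y z u : Fin 3 → ℝ, R ![x, y, z, u] = -R ![x, y, u, z])
    (hsym3 : ∀ x y z u : Fin 3 → ℝ, R ![x, y, z, u] = R ![z, u, x, y])
    (hq : ∀ x y z u : Fin 3 → ℝ, R ![q x, q y, q z, q u] = R ![x, y, z, u])
    (x : Fin 3 → ℝ) (α β γ : ℝ) :
    let u := α • x + β • q x + γ • q (q x)
    R ![u, q u, u, q u] =
      ((α ^ 2 + β * γ) ^ 2 + (γ ^ 2 + α * β) ^ 2 + (β ^ 2 - α * γ) ^ 2) *
          R ![x, q x, x, q x] -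
        2 * ((α ^ 2 + β * γ) * (γ ^ 2 + α * β) + (γ ^ 2 + α * β) * (β ^ 2 - α * γ) +
            (α ^ 2 + β * γ) * (β ^ 2 - α * γ)) *
          R ![x, q x, q (q x), x] := by
  intro u
  have hq3 : ∀ v : Fin 3 → ℝ, q (q (q v)) = -v := by
    intro v; funext i; fin_cases i <;> simp [q]
  have smul4 : ∀ (c1 c2 c3 c4 : ℝ) (p1 p2 p3 p4 : Fin 3 → ℝ),
      R ![c1 • p1, c2 • p2, c3 • p3, c4 • p4] = (c1 * c2 * c3 * c4) * R ![p1, p2, p3, p4] := by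
    intro c1 c2 c3 c4 p1 p2 p3 p4
    have e : (fun i => ![c1, c2, c3, c4] i • ![p1, p2, p3, p4] i)
        = ![c1 • p1, c2 • p2, c3 • p3, c4 • p4] := by
      funext i; fin_cases i <;> rfl
    have h := R.map_smul_univ ![c1, c2, c3, c4] ![p1, p2, p3, p4]
    rw [e] at h
    rw [h, Fin.prod_univ_four]
    simp [smul_eq_mul]
  have n0 : ∀ p1 p2 p3 p4 : Fin 3 → ℝ, R ![-p1, p2, p3, p4] = -R ![p1, p2, p3, p4] := by
    intro p1 p2 p3 p4; simpa using smul4 (-1) 1 1 1 p1 p2 p3 p4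
  have n1 : ∀ p1 p2 p3 p4 : Fin 3 → ℝ, R ![p1, -p2, p3, p4] = -R ![p1, p2, p3, p4] := by
    intro p1 p2 p3 p4; simpa using smul4 1 (-1) 1 1 p1 p2 p3 p4
  have n2 : ∀ p1 p2 p3 p4 : Fin 3 → ℝ, R ![p1, p2, -p3, p4] = -R ![p1, p2, p3, p4] := by
    intro p1 p2 p3 p4; simpa using smul4 1 1 (-1) 1 p1 p2 p3 p4
  have n3 : ∀ p1 p2 p3 p4 : Fin 3 → ℝ, R ![p1, p2, p3, -p4] = -R ![p1, p2, p3, p4] := by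
    intro p1 p2 p3 p4; simpa using smul4 1 1 1 (-1) p1 p2 p3 p4
  have e0000 : R ![x, x, x, x] = 0 := by
    have h := hsym1 (x) (x) (x) (x)
    linarith
  have e0001 : R ![x, x, x, q x] = 0 := by
    have h := hsym1 (x) (x) (x) (q x)
    linarith
  have e0002 : R ![x, x, x, q (q x)] = 0 := by
    have h := hsym1 (x) (x) (x) (q (q x))
    linarith
  have e0010 : R ![x, x, q x, x] = 0 := by
    have h := hsym1 (x) (x) (q x) (x)
    linarith
  have e0011 : R ![x, x, q x, q x] = 0 := by
    have h := hsym1 (x) (x) (q x) (q x)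
    linarith
  have e0012 : R ![x, x, q x, q (q x)] = 0 := by
    have h := hsym1 (x) (x) (q x) (q (q x))
    linarith
  have e0020 : R ![x, x, q (q x), x] = 0 := by
    have h := hsym1 (x) (x) (q (q x)) (x)
    linarith
  have e0021 : R ![x, x, q (q x), q x] = 0 := by
    have h := hsym1 (x) (x) (q (q x)) (q x)
    linarith
  have e0022 : R ![x, x, q (q x), q (q x)] = 0 := by
    have h := hsym1 (x) (x) (q (q x)) (q (q x))
    linarith
  have e0100 : R ![x, q x, x, x] = 0 := by
    have h := hsym2 (x) (q x) (x) (x)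
    linarith
  have e0111 : R ![x, q x, q x, q x] = 0 := by
    have h := hsym2 (x) (q x) (q x) (q x)
    linarith
  have e0122 : R ![x, q x, q (q x), q (q x)] = 0 := by
    have h := hsym2 (x) (q x) (q (q x)) (q (q x))
    linarith
  have e0200 : R ![x, q (q x), x, x] = 0 := by
    have h := hsym2 (x) (q (q x)) (x) (x)
    linarith
  have e0211 : R ![x, q (q x), q x, q x] = 0 := by
    have h := hsym2 (x) (q (q x)) (q x) (q x)
    linarith
  have e0222 : R ![x, q (q x), q (q x), q (q x)] = 0 := by
    have h := hsym2 (x) (q (q x)) (q (q x)) (q (q x))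
    linarith
  have e1000 : R ![q x, x, x, x] = 0 := by
    have h := hsym2 (q x) (x) (x) (x)
    linarith
  have e1011 : R ![q x, x, q x, q x] = 0 := by
    have h := hsym2 (q x) (x) (q x) (q x)
    linarith
  have e1022 : R ![q x, x, q (q x), q (q x)] = 0 := by
    have h := hsym2 (q x) (x) (q (q x)) (q (q x))
    linarith
  have e1100 : R ![q x, q x, x, x] = 0 := by
    have h := hsym1 (q x) (q x) (x) (x)
    linarith
  have e1101 : R ![q x, q x, x, q x] = 0 := by
    have h := hsym1 (q x) (q x) (x) (q x)
    linarith
  have e1102 : R ![q x, q x, x, q (q x)] = 0 := by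
    have h := hsym1 (q x) (q x) (x) (q (q x))
    linarith
  have e1110 : R ![q x, q x, q x, x] = 0 := by
    have h := hsym1 (q x) (q x) (q x) (x)
    linarith
  have e1111 : R ![q x, q x, q x, q x] = 0 := by
    have h := hsym1 (q x) (q x) (q x) (q x)
    linarith
  have e1112 : R ![q x, q x, q x, q (q x)] = 0 := by
    have h := hsym1 (q x) (q x) (q x) (q (q x))
    linarith
  have e1120 : R ![q x, q x, q (q x), x] = 0 := by
    have h := hsym1 (q x) (q x) (q (q x)) (x)
    linarith
  have e1121 : R ![q x, q x, q (q x), q x] = 0 := by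
    have h := hsym1 (q x) (q x) (q (q x)) (q x)
    linarith
  have e1122 : R ![q x, q x, q (q x), q (q x)] = 0 := by
    have h := hsym1 (q x) (q x) (q (q x)) (q (q x))
    linarith
  have e1200 : R ![q x, q (q x), x, x] = 0 := by
    have h := hsym2 (q x) (q (q x)) (x) (x)
    linarith
  have e1211 : R ![q x, q (q x), q x, q x] = 0 := by
    have h := hsym2 (q x) (q (q x)) (q x) (q x)
    linarith
  have e1222 : R ![q x, q (q x), q (q x), q (q x)] = 0 := by
    have h := hsym2 (q x) (q (q x)) (q (q x)) (q (q x))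
    linarith
  have e2000 : R ![q (q x), x, x, x] = 0 := by
    have h := hsym2 (q (q x)) (x) (x) (x)
    linarith
  have e2011 : R ![q (q x), x, q x, q x] = 0 := by
    have h := hsym2 (q (q x)) (x) (q x) (q x)
    linarith
  have e2022 : R ![q (q x), x, q (q x), q (q x)] = 0 := by
    have h := hsym2 (q (q x)) (x) (q (q x)) (q (q x))
    linarith
  have e2100 : R ![q (q x), q x, x, x] = 0 := by
    have h := hsym2 (q (q x)) (q x) (x) (x)
    linarith
  have e2111 : R ![q (q x), q x, q x, q x] = 0 := by
    have h := hsym2 (q (q x)) (q x) (q x) (q x)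
    linarith
  have e2122 : R ![q (q x), q x, q (q x), q (q x)] = 0 := by
    have h := hsym2 (q (q x)) (q x) (q (q x)) (q (q x))
    linarith
  have e2200 : R ![q (q x), q (q x), x, x] = 0 := by
    have h := hsym1 (q (q x)) (q (q x)) (x) (x)
    linarith
  have e2201 : R ![q (q x), q (q x), x, q x] = 0 := by
    have h := hsym1 (q (q x)) (q (q x)) (x) (q x)
    linarith
  have e2202 : R ![q (q x), q (q x), x, q (q x)] = 0 := by
    have h := hsym1 (q (q x)) (q (q x)) (x) (q (q x))
    linarith
  have e2210 : R ![q (q x), q (q x), q x, x] = 0 := by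
    have h := hsym1 (q (q x)) (q (q x)) (q x) (x)
    linarith
  have e2211 : R ![q (q x), q (q x), q x, q x] = 0 := by
    have h := hsym1 (q (q x)) (q (q x)) (q x) (q x)
    linarith
  have e2212 : R ![q (q x), q (q x), q x, q (q x)] = 0 := by
    have h := hsym1 (q (q x)) (q (q x)) (q x) (q (q x))
    linarith
  have e2220 : R ![q (q x), q (q x), q (q x), x] = 0 := by
    have h := hsym1 (q (q x)) (q (q x)) (q (q x)) (x)
    linarith
  have e2221 : R ![q (q x), q (q x), q (q x), q x] = 0 := by
    have h := hsym1 (q (q x)) (q (q x)) (q (q x)) (q x)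
    linarith
  have e2222 : R ![q (q x), q (q x), q (q x), q (q x)] = 0 := by
    have h := hsym1 (q (q x)) (q (q x)) (q (q x)) (q (q x))
    linarith
  have e1001 : R ![q x, x, x, q x] = -(R ![x, q x, x, q x]) := by
    have h := hsym1 (x) (q x) (x) (q x)
    linarith
  have e0110 : R ![x, q x, q x, x] = -(R ![x, q x, x, q x]) := by
    have h := hsym2 (x) (q x) (x) (q x)
    linarith
  have e1212 : R ![q x, q (q x), q x, q (q x)] = R ![x, q x, x, q x] := by
    have h := hq (x) (q x) (x) (q x)
    linarith
  have e2020 : R ![q (q x), x, q (q x), x] = R ![x, q x, x, q x] := by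
    have h := hq (q (q x)) (x) (q (q x)) (x)
    rw [hq3 x] at h
    rw [n0 (x) (q x) (-x) (q x)] at h
    rw [n2 (x) (q x) (x) (q x)] at h
    linarith
  have e1020 : R ![q x, x, q (q x), x] = -(R ![x, q x, q (q x), x]) := by
    have h := hsym1 (x) (q x) (q (q x)) (x)
    linarith
  have e0102 : R ![x, q x, x, q (q x)] = -(R ![x, q x, q (q x), x]) := by
    have h := hsym2 (x) (q x) (q (q x)) (x)
    linarith
  have e2001 : R ![q (q x), x, x, q x] = R ![x, q x, q (q x), x] := by
    have h := hsym3 (x) (q x) (q (q x)) (x)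
    linarith
  have e1201 : R ![q x, q (q x), x, q x] = -(R ![x, q x, q (q x), x]) := by
    have h := hq (x) (q x) (q (q x)) (x)
    rw [hq3 x] at h
    rw [n2 (q x) (q (q x)) (x) (q x)] at h
    linarith
  have e2012 : R ![q (q x), x, q x, q (q x)] = R ![x, q x, q (q x), x] := by
    have h := hq (q (q x)) (x) (q x) (q (q x))
    rw [hq3 x] at h
    rw [n0 (x) (q x) (q (q x)) (-x)] at h
    rw [n3 (x) (q x) (q (q x)) (x)] at h
    linarith
  have e1010 : R ![q x, x, q x, x] = R ![x, q x, x, q x] := by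
    have h := hsym2 (q x) (x) (x) (q x)
    linarith [e1001]
  have e2112 : R ![q (q x), q x, q x, q (q x)] = -(R ![x, q x, x, q x]) := by
    have h := hq (q x) (x) (x) (q x)
    linarith [e1001]
  have e0220 : R ![x, q (q x), q (q x), x] = -(R ![x, q x, x, q x]) := by
    have h := hq (x) (q (q x)) (q (q x)) (x)
    rw [hq3 x] at h
    rw [n1 (q x) (x) (-x) (q x)] at h
    rw [n2 (q x) (x) (x) (q x)] at h
    linarith [e1001]
  have e1221 : R ![q x, q (q x), q (q x), q x] = -(R ![x, q x, x, q x]) := by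
    have h := hq (x) (q x) (q x) (x)
    linarith [e0110]
  have e2002 : R ![q (q x), x, x, q (q x)] = -(R ![x, q x, x, q x]) := by
    have h := hq (q (q x)) (x) (x) (q (q x))
    rw [hq3 x] at h
    rw [n0 (x) (q x) (q x) (-x)] at h
    rw [n3 (x) (q x) (q x) (x)] at h
    linarith [e0110]
  have e1002 : R ![q x, x, x, q (q x)] = R ![x, q x, q (q x), x] := by
    have h := hsym2 (q x) (x) (q (q x)) (x)
    linarith [e1020]
  have e2010 : R ![q (q x), x, q x, x] = -(R ![x, q x, q (q x), x]) := by
    have h := hsym3 (q x) (x) (q (q x)) (x)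
    linarith [e1020]
  have e2101 : R ![q (q x), q x, x, q x] = R ![x, q x, q (q x), x] := by
    have h := hq (q x) (x) (q (q x)) (x)
    rw [hq3 x] at h
    rw [n2 (q (q x)) (q x) (x) (q x)] at h
    linarith [e1020]
  have e0212 : R ![x, q (q x), q x, q (q x)] = -(R ![x, q x, q (q x), x]) := by
    have h := hq (x) (q (q x)) (q x) (q (q x))
    rw [hq3 x] at h
    rw [n1 (q x) (x) (q (q x)) (-x)] at h
    rw [n3 (q x) (x) (q (q x)) (x)] at h
    linarith [e1020]
  have e0201 : R ![x, q (q x), x, q x] = -(R ![x, q x, q (q x), x]) := by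
    have h := hsym3 (x) (q x) (x) (q (q x))
    linarith [e0102]
  have e1210 : R ![q x, q (q x), q x, x] = R ![x, q x, q (q x), x] := by
    have h := hq (x) (q x) (x) (q (q x))
    rw [hq3 x] at h
    rw [n3 (q x) (q (q x)) (q x) (x)] at h
    linarith [e0102]
  have e2021 : R ![q (q x), x, q (q x), q x] = -(R ![x, q x, q (q x), x]) := by
    have h := hq (q (q x)) (x) (q (q x)) (q x)
    rw [hq3 x] at h
    rw [n0 (x) (q x) (-x) (q (q x))] at h
    rw [n2 (x) (q x) (x) (q (q x))] at h
    linarith [e0102]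
  have e0112 : R ![x, q x, q x, q (q x)] = -(R ![x, q x, q (q x), x]) := by
    have h := hq (q (q x)) (x) (x) (q x)
    rw [hq3 x] at h
    rw [n0 (x) (q x) (q x) (q (q x))] at h
    linarith [e2001]
  have e1220 : R ![q x, q (q x), q (q x), x] = R ![x, q x, q (q x), x] := by
    have h := hq (q x) (q (q x)) (q (q x)) (x)
    rw [hq3 x] at h
    rw [n1 (q (q x)) (x) (-x) (q x)] at h
    rw [n2 (q (q x)) (x) (x) (q x)] at h
    linarith [e2001]
  have e2121 : R ![q (q x), q x, q (q x), q x] = R ![x, q x, x, q x] := by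
    have h := hq (q x) (x) (q x) (x)
    linarith [e1010]
  have e0202 : R ![x, q (q x), x, q (q x)] = R ![x, q x, x, q x] := by
    have h := hq (x) (q (q x)) (x) (q (q x))
    rw [hq3 x] at h
    rw [n1 (q x) (x) (q x) (-x)] at h
    rw [n3 (q x) (x) (q x) (x)] at h
    linarith [e1010]
  have e0210 : R ![x, q (q x), q x, x] = R ![x, q x, q (q x), x] := by
    have h := hsym3 (q x) (x) (x) (q (q x))
    linarith [e1002]
  have e2110 : R ![q (q x), q x, q x, x] = -(R ![x, q x, q (q x), x]) := by
    have h := hq (q x) (x) (x) (q (q x))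
    rw [hq3 x] at h
    rw [n3 (q (q x)) (q x) (q x) (x)] at h
    linarith [e1002]
  have e0221 : R ![x, q (q x), q (q x), q x] = R ![x, q x, q (q x), x] := by
    have h := hq (x) (q (q x)) (q (q x)) (q x)
    rw [hq3 x] at h
    rw [n1 (q x) (x) (-x) (q (q x))] at h
    rw [n2 (q x) (x) (x) (q (q x))] at h
    linarith [e1002]
  have e0121 : R ![x, q x, q (q x), q x] = R ![x, q x, q (q x), x] := by
    have h := hq (q (q x)) (x) (q x) (x)
    rw [hq3 x] at h
    rw [n0 (x) (q x) (q (q x)) (q x)] at h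
    linarith [e2010]
  have e1202 : R ![q x, q (q x), x, q (q x)] = -(R ![x, q x, q (q x), x]) := by
    have h := hq (q x) (q (q x)) (x) (q (q x))
    rw [hq3 x] at h
    rw [n1 (q (q x)) (x) (q x) (-x)] at h
    rw [n3 (q (q x)) (x) (q x) (x)] at h
    linarith [e2010]
  have e1012 : R ![q x, x, q x, q (q x)] = R ![x, q x, q (q x), x] := by
    have h := hq (x) (q (q x)) (x) (q x)
    rw [hq3 x] at h
    rw [n1 (q x) (x) (q x) (q (q x))] at h
    linarith [e0201]
  have e2120 : R ![q (q x), q x, q (q x), x] = -(R ![x, q x, q (q x), x]) := by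
    have h := hq (q (q x)) (q x) (q (q x)) (x)
    rw [hq3 x] at h
    rw [n0 (x) (q (q x)) (-x) (q x)] at h
    rw [n2 (x) (q (q x)) (x) (q x)] at h
    linarith [e0201]
  have e1021 : R ![q x, x, q (q x), q x] = -(R ![x, q x, q (q x), x]) := by
    have h := hq (x) (q (q x)) (q x) (x)
    rw [hq3 x] at h
    rw [n1 (q x) (x) (q (q x)) (q x)] at h
    linarith [e0210]
  have e2102 : R ![q (q x), q x, x, q (q x)] = R ![x, q x, q (q x), x] := by
    have h := hq (q (q x)) (q x) (x) (q (q x))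
    rw [hq3 x] at h
    rw [n0 (x) (q (q x)) (q x) (-x)] at h
    rw [n3 (x) (q (q x)) (q x) (x)] at h
    linarith [e0210]
  have hqu : q (α • x + β • q x + γ • q (q x)) = (-γ) • x + α • q x + β • q (q x) := by
    funext i; fin_cases i <;> (simp [q, Matrix.vecHead, Matrix.vecTail, Pi.smul_apply, Pi.add_apply, smul_eq_mul]; ring)
  have key : (![α • x + β • q x + γ • q (q x), q (α • x + β • q x + γ • q (q x)), α • x + β • q x + γ • q (q x), q (α • x + β • q x + γ • q (q x))] : Fin 4 → Fin 3 → ℝ)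
      = fun i => ∑ j : Fin 3,
          (![![α, β, γ], ![-γ, α, β], ![α, β, γ], ![-γ, α, β]] : Fin 4 → Fin 3 → ℝ) i j
            • (![x, q x, q (q x)] : Fin 3 → Fin 3 → ℝ) j := by
    funext i
    fin_cases i <;> simp [Fin.sum_univ_three, hqu]
  have sum81 : ∀ F : (Fin 4 → Fin 3) → ℝ,
      ∑ r : Fin 4 → Fin 3, F r = ∑ i : Fin 3, ∑ j : Fin 3, ∑ k : Fin 3, ∑ l : Fin 3, F ![i, j, k, l] := by
    intro F
    rw [← Fintype.sum_equiv
      (⟨fun p => ![p.1, p.2.1, p.2.2.1, p.2.2.2], fun r => (r 0, r 1, r 2, r 3),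
        fun p => rfl, fun r => funext fun i => by fin_cases i <;> rfl⟩ :
        (Fin 3 × Fin 3 × Fin 3 × Fin 3) ≃ (Fin 4 → Fin 3))
      (fun p => F ![p.1, p.2.1, p.2.2.1, p.2.2.2]) F (fun _ => rfl)]
    simp only [Fintype.sum_prod_type]
  have hcs : ∀ a b c d : Fin 3,
      (fun i => (![![α, β, γ], ![-γ, α, β], ![α, β, γ], ![-γ, α, β]] : Fin 4 → Fin 3 → ℝ) i (![a, b, c, d] i)
          • (![x, q x, q (q x)] : Fin 3 → Fin 3 → ℝ) (![a, b, c, d] i))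
        = ![(![![α, β, γ], ![-γ, α, β], ![α, β, γ], ![-γ, α, β]] : Fin 4 → Fin 3 → ℝ) 0 a • (![x, q x, q (q x)] : Fin 3 → Fin 3 → ℝ) a,
            (![![α, β, γ], ![-γ, α, β], ![α, β, γ], ![-γ, α, β]] : Fin 4 → Fin 3 → ℝ) 1 b • (![x, q x, q (q x)] : Fin 3 → Fin 3 → ℝ) b,
            (![![α, β, γ], ![-γ, α, β], ![α, β, γ], ![-γ, α, β]] : Fin 4 → Fin 3 → ℝ) 2 c • (![x, q x, q (q x)] : Fin 3 → Fin 3 → ℝ) c,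
            (![![α, β, γ], ![-γ, α, β], ![α, β, γ], ![-γ, α, β]] : Fin 4 → Fin 3 → ℝ) 3 d • (![x, q x, q (q x)] : Fin 3 → Fin 3 → ℝ) d] := by
    intro a b c d
    funext i; fin_cases i <;> rfl
  show R ![α • x + β • q x + γ • q (q x), q (α • x + β • q x + γ • q (q x)), α • x + β • q x + γ • q (q x), q (α • x + β • q x + γ • q (q x))] = _
  rw [key, R.map_sum, sum81]
  simp only [Fin.sum_univ_three, hcs, smul4]
  norm_num [Matrix.cons_val_zero, Matrix.cons_val_one, Matrix.head_cons, Matrix.cons_val_two,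
    Matrix.tail_cons, Matrix.cons_val_three]
  simp only [e0000, e0001, e0002, e0010, e0011, e0012, e0020, e0021, e0022, e0100, e0111, e0122, e0200, e0211, e0222, e1000, e1011, e1022, e1100, e1101, e1102, e1110, e1111, e1112, e1120, e1121, e1122, e1200, e1211, e1222, e2000, e2011, e2022, e2100, e2111, e2122, e2200, e2201, e2202, e2210, e2211, e2212, e2220, e2221, e2222, e1001, e0110, e1212, e2020, e1020, e0102, e2001, e1201, e2012, e1010, e2112, e0220, e1221, e2002, e1002, e2010, e2101, e0212, e0201, e1210, e2021, e0112, e1220, e2121, e0202, e0210, e2110, e0221, e0121, e1202, e1012, e2120, e1021, e2102]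
  ring
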